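/- arXiv:2004.02847 — 5 statements merged into one kernel-verified Lean document; each statement's English description precedes it below -/
import Mathlib

section
/- Let K be a field of characteristic ≠ 2, let f ∈ K[X] be a monic quadratic polynomial with adjusted post-critical orbit {c_n}, and let α ∈ K be an element not belonging to the post-critical orbit of f. If the Galois group Gal(K_∞(f,α)/K), equipped with the Krull topology, is topologically finitely generated, then the subgroup of Kˣ/(Kˣ)² generated by the classes of the elements c_{n,α}, n ≥ 1, is finite. -/
/-!
For `n ≥ 1` write `f^n - α = q ∘ f` with `q = f^(n-1) - α`. Every root `s` of `q` lies in
`K_∞ = K_∞(f, α)`, and so does a square root of `s + b`, namely `r - a` for any `r` with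
`f r = s`. Evaluating at the critical point `a`, where `f a = -b`, gives
`f^n(a) - α = q(-b) = ∏ₛ (-b - s) = (-1)^(2^(n-1)) · t²` with `t ∈ K_∞`, so every `c_{n,α}`
becomes a square in `K_∞`.

A class `u ∈ Kˣ/(Kˣ)²` with `u = v²` in `K_∞` is determined by the signs `σ v / v = ±1` for `σ`
in a finite topological generating set `S`: if two classes give the same signs then `v₁ v₂` is
fixed by `S`, hence by the closed subgroup it generates, which is the whole Galois group. As
`K_∞/K` is normal and `2 ≠ 0`, this forces `v₁ v₂ ∈ K`. So there are at most `2^|S|` such classes.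
-/

open Polynomial

namespace Polynomial

section Iterate

variable {R : Type*} [CommRing R] (f : R[X])

lemma aeval_iterate_comp {A : Type*} [CommRing A] [Algebra R A] (n : ℕ) (x : A) :
    aeval x ((fun p => p.comp f)^[n] X) = (fun y => aeval y f)^[n] x := by
  induction n generalizing x with
  | zero => simp
  | succ n ih => rw [Function.iterate_succ_apply', aeval_comp, ih, Function.iterate_succ_apply]

lemma natDegree_iterate_comp_X [IsDomain R] (n : ℕ) :
    ((fun p => p.comp f)^[n] X).natDegree = f.natDegree ^ n := by
  induction n with
  | zero => simp
  | succ n ih => rw [Function.iterate_succ_apply', natDegree_comp, ih, pow_succ]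

variable {f}

lemma Monic.iterate_comp_X (hf : f.Monic) (hd : f.natDegree ≠ 0) (n : ℕ) :
    ((fun p => p.comp f)^[n] X).Monic := by
  induction n with
  | zero => exact monic_X
  | succ n ih => rw [Function.iterate_succ_apply']; exact ih.comp hf hd

lemma Monic.iterate_comp_X_sub_C [IsDomain R] (hf : f.Monic) (hd : f.natDegree ≠ 0) (n : ℕ)
    (c : R) : ((fun p => p.comp f)^[n] X - C c).Monic :=
  (hf.iterate_comp_X hd n).sub_of_left <| degree_C_le.trans_lt <|
    natDegree_pos_iff_degree_pos.mp (by rw [natDegree_iterate_comp_X]; positivity)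

end Iterate

section Quadratic

variable {R : Type*} [CommRing R] (a b : R)

lemma monic_X_sub_C_sq_sub_C : ((X - C a) ^ 2 - C b).Monic := by monicity!

lemma natDegree_X_sub_C_sq_sub_C [Nontrivial R] : ((X - C a) ^ 2 - C b).natDegree = 2 := by
  compute_degree!

end Quadratic

lemma isSquare_neg_one_pow_natDegree_mul_eval {M : Type*} [CommRing M] [IsDomain M] {q : M[X]}
    (hq : q.Monic) (hs : q.Splits) (c : M) (h : ∀ s ∈ q.roots, IsSquare (s - c)) :
    IsSquare ((-1) ^ q.natDegree * q.eval c) := by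
  rw [hs.eval_eq_prod_roots_of_monic hq, hs.natDegree_eq_card_roots,
    ← Multiset.card_map (c - ·), ← Multiset.prod_map_neg, Multiset.map_map]
  refine Multiset.prod_induction _ _ (fun _ _ => IsSquare.mul) IsSquare.one ?_
  simp only [Multiset.mem_map, Function.comp_apply, neg_sub]
  rintro _ ⟨s, hs, rfl⟩
  exact h s hs

end Polynomial

section PreimageTower

variable {K : Type*} [Field K]

/-- The field `K_∞(f, α)`. -/
noncomputable abbrev iteratedPreimageField (f : K[X]) (α : K) :
    IntermediateField K (AlgebraicClosure K) :=
  IntermediateField.adjoin K {x : AlgebraicClosure K | ∃ n : ℕ, 1 ≤ n ∧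
    aeval x ((fun p => p.comp f)^[n] X) = algebraMap K (AlgebraicClosure K) α}

lemma iteratedPreimageField_eq_iSup {f : K[X]} (hf : f.Monic) (hd : 0 < f.natDegree) (α : K) :
    iteratedPreimageField f α = ⨆ n : ℕ, IntermediateField.adjoin K
      (((fun p => p.comp f)^[n + 1] X - C α).rootSet (AlgebraicClosure K)) := by
  rw [← IntermediateField.adjoin_iUnion]
  refine congrArg (IntermediateField.adjoin K) (Set.ext fun x => ?_)
  simp only [Set.mem_ofPred_eq, Set.mem_iUnion, mem_rootSet,
    (hf.iterate_comp_X_sub_C hd.ne' _ α).ne_zero, ne_eq, not_false_eq_true, true_and,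
    map_sub, aeval_C, sub_eq_zero]
  constructor
  · rintro ⟨n, hn, hx⟩
    exact ⟨n - 1, by rwa [Nat.sub_add_cancel hn]⟩
  · rintro ⟨n, hx⟩
    exact ⟨n + 1, by omega, hx⟩

lemma normal_iteratedPreimageField {f : K[X]} (hf : f.Monic) (hd : 0 < f.natDegree) (α : K) :
    Normal K (iteratedPreimageField f α) := by
  rw [iteratedPreimageField_eq_iSup hf hd]
  exact IntermediateField.normal_iSup (h := fun _ => Normal.of_isSplittingField (hFEp :=
    IntermediateField.adjoin_rootSet_isSplittingField (IsAlgClosed.splits _)))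

variable {a b : K} {f : K[X]} (hf : f = (X - C a) ^ 2 - C b) (α : K)
include hf

lemma exists_sqrt_mem_iteratedPreimageField {m : ℕ} {s : AlgebraicClosure K}
    (hs : aeval s ((fun p => p.comp f)^[m] X) = algebraMap K _ α) :
    ∃ t ∈ iteratedPreimageField f α, t * t = s + algebraMap K _ b := by
  obtain ⟨t, ht⟩ := IsAlgClosed.exists_eq_mul_self (s + algebraMap K _ b)
  have hpre : aeval (algebraMap K _ a + t) f = s := by
    rw [hf]
    simp only [map_sub, map_pow, aeval_X, aeval_C]
    linear_combination ht.symm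
  have hmem : algebraMap K _ a + t ∈ iteratedPreimageField f α := by
    refine IntermediateField.subset_adjoin K _ ⟨m + 1, by omega, ?_⟩
    rw [aeval_iterate_comp, Function.iterate_succ_apply, hpre, ← aeval_iterate_comp, hs]
  refine ⟨t, ?_, ht.symm⟩
  simpa using sub_mem hmem (IntermediateField.algebraMap_mem _ a)

lemma isSquare_neg_one_pow_mul_iterate_sub (m : ℕ) :
    IsSquare ((-1) ^ 2 ^ m * algebraMap K (iteratedPreimageField f α)
      ((fun x => f.eval x)^[m + 1] a - α)) := by
  set L := iteratedPreimageField f α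
  set q := (fun p => p.comp f)^[m] X - C α
  have hfm : f.Monic := hf ▸ monic_X_sub_C_sq_sub_C a b
  have hfd : f.natDegree = 2 := hf ▸ natDegree_X_sub_C_sq_sub_C a b
  have hqm : q.Monic := hfm.iterate_comp_X_sub_C (by omega) m α
  have hroot : ∀ {s : AlgebraicClosure K}, aeval s q = 0 →
      ∃ t ∈ L, t * t = s + algebraMap K _ b := fun hs =>
    exists_sqrt_mem_iteratedPreimageField hf α (by rwa [map_sub, aeval_C, sub_eq_zero] at hs)
  have hsplit : (q.map (algebraMap K L)).Splits := by
    refine IntermediateField.splits_of_splits (IsAlgClosed.splits _) fun s hs => ?_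
    obtain ⟨t, ht, hts⟩ := hroot ((mem_rootSet.mp hs).2)
    rw [show s = t * t - algebraMap K _ b by rw [hts]; ring]
    exact sub_mem (mul_mem ht ht) (IntermediateField.algebraMap_mem _ b)
  have hsq := isSquare_neg_one_pow_natDegree_mul_eval (hqm.map _) hsplit (algebraMap K L (-b)) ?_
  · rw [natDegree_map, natDegree_sub_C, natDegree_iterate_comp_X, hfd, eval_map_algebraMap,
      aeval_algebraMap_apply] at hsq
    convert hsq using 3
    rw [map_sub, aeval_C, aeval_iterate_comp, Function.iterate_succ_apply]
    simp [hf, coe_aeval_eq_eval]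
  · intro s hs
    have hs' : aeval (s : AlgebraicClosure K) q = 0 := by
      rw [mem_roots ((hqm.map _).ne_zero), IsRoot, eval_map_algebraMap] at hs
      rw [← IntermediateField.algebraMap_apply, aeval_algebraMap_apply, hs, map_zero]
    obtain ⟨t, ht, hts⟩ := hroot hs'
    exact ⟨⟨t, ht⟩, Subtype.ext (by simp [hts])⟩

lemma isSquare_algebraMap_adjustedOrbit {n : ℕ} (hn : 1 ≤ n) :
    IsSquare (algebraMap K (iteratedPreimageField f α)
      (if n = 1 then -((fun x => f.eval x)^[1] a) + α else (fun x => f.eval x)^[n] a - α)) := by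
  obtain ⟨m, rfl⟩ : ∃ m, n = m + 1 := ⟨n - 1, by omega⟩
  have hsq := isSquare_neg_one_pow_mul_iterate_sub hf α m
  rcases m with _ | m
  · simpa [neg_add_eq_sub] using hsq
  · rw [if_neg (by omega)]
    rwa [(Nat.even_pow.mpr ⟨even_two, by omega⟩).neg_one_pow, one_mul] at hsq

end PreimageTower

section SquareClasses

variable {K L : Type*} [Field K] [Field L] [Algebra K L]

lemma AlgEquiv.apply_eq_self_of_topologicalClosure_eq_top [Algebra.IsIntegral K L]
    {S : Set Gal(L/K)} (hS : (Subgroup.closure S).topologicalClosure = ⊤) {x : L}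
    (hx : ∀ σ ∈ S, σ x = x) (σ : Gal(L/K)) : σ x = x := by
  have hclosed := (MulAction.stabilizer Gal(L/K) x).isClosed_of_isOpen
    (stabilizer_isOpen_of_isIntegral x)
  have hle := Subgroup.topologicalClosure_minimal _
    ((Subgroup.closure_le _).mpr fun τ hτ => MulAction.mem_stabilizer_iff.mpr (hx τ hτ)) hclosed
  rw [hS] at hle
  exact hle (Subgroup.mem_top σ)

lemma AlgEquiv.apply_eq_or_eq_neg_of_mul_self {t : L} {c : K} (ht : t * t = algebraMap K L c)
    (σ : Gal(L/K)) : σ t = t ∨ σ t = -t :=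
  mul_self_eq_mul_self_iff.mp (by rw [← map_mul, ht, AlgEquiv.commutes])

lemma mem_range_of_mul_self_of_forall_apply_eq [Normal K L] (h2 : (2 : K) ≠ 0) {t : L} {c : K}
    (ht : t * t = algebraMap K L c) (hfix : ∀ σ : Gal(L/K), σ t = t) :
    t ∈ (algebraMap K L).range := by
  by_contra hnot
  have hint : IsIntegral K t := Algebra.IsIntegral.isIntegral t
  have hmin : minpoly K t = X ^ 2 - C c := by
    refine (eq_of_monic_of_dvd_of_natDegree_le (minpoly.monic hint) ?_
      (minpoly.dvd K t ?_) ?_).symm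
    · monicity!
    · simp [sq, ht]
    · rw [natDegree_X_pow_sub_C]
      exact (minpoly.two_le_natDegree_iff hint).mpr hnot
  obtain ⟨σ, hσ⟩ := minpoly.exists_algEquiv_of_root' (x := -t) hint.isAlgebraic
    (by simp [hmin, sq, ht])
  have h2L : (2 : L) ≠ 0 := by
    rw [← map_ofNat (algebraMap K L) 2]
    exact (_root_.map_ne_zero _).mpr h2
  have ht0 : t = 0 := by
    have : (2 : L) * t = 0 := by linear_combination (hfix σ).symm.trans hσ
    exact (mul_eq_zero.mp this).resolve_left h2L
  exact hnot ⟨0, by rw [map_zero, ht0]⟩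

lemma QuotientGroup.mk'_eq_mk'_of_mul_self_eq {u₁ u₂ : Kˣ} {k : K} (hk : k * k = u₁ * u₂) :
    QuotientGroup.mk' (powMonoidHom 2 : Kˣ →* Kˣ).range u₁ = QuotientGroup.mk' _ u₂ := by
  have hk0 : k ≠ 0 := by rintro rfl; simpa using hk.symm
  refine (QuotientGroup.mk'_eq_mk' _).mpr ⟨_, ⟨Units.mk0 k hk0 * u₁⁻¹, rfl⟩, Units.ext ?_⟩
  simp only [powMonoidHom_apply, Units.val_mul, Units.val_pow_eq_pow_val, Units.val_inv_eq_inv_val,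
    Units.val_mk0]
  field_simp
  linear_combination hk

variable (K L) in
/-- The kernel of `Kˣ/(Kˣ)² → Lˣ/(Lˣ)²`. -/
def squareClassKernel : Subgroup (Kˣ ⧸ (powMonoidHom 2 : Kˣ →* Kˣ).range) :=
  ((powMonoidHom 2 : Lˣ →* Lˣ).range.comap (Units.map (algebraMap K L : K →* L))).map
    (QuotientGroup.mk' _)

lemma mk'_mem_squareClassKernel {u : Kˣ} (h : IsSquare (algebraMap K L u)) :
    QuotientGroup.mk' _ u ∈ squareClassKernel K L := by
  obtain ⟨r, hr⟩ := h
  have hr0 : r ≠ 0 := by rintro rfl; simp at hr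
  exact ⟨u, ⟨Units.mk0 r hr0, Units.ext (by simp [sq, hr])⟩, rfl⟩

lemma exists_mul_self_of_mem_squareClassKernel {q : Kˣ ⧸ (powMonoidHom 2 : Kˣ →* Kˣ).range}
    (hq : q ∈ squareClassKernel K L) :
    ∃ u : Kˣ, QuotientGroup.mk' _ u = q ∧ ∃ v : L, v * v = algebraMap K L u := by
  obtain ⟨u, ⟨v, hv⟩, rfl⟩ := hq
  exact ⟨u, rfl, v, by simpa [sq] using congrArg Units.val hv⟩

lemma mk'_eq_mk'_of_forall_apply_eq_iff [Normal K L] (h2 : (2 : K) ≠ 0) {S : Set Gal(L/K)}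
    (hS : (Subgroup.closure S).topologicalClosure = ⊤) {u₁ u₂ : Kˣ} {v₁ v₂ : L}
    (hv₁ : v₁ * v₁ = algebraMap K L u₁) (hv₂ : v₂ * v₂ = algebraMap K L u₂)
    (hsign : ∀ σ ∈ S, σ v₁ = v₁ ↔ σ v₂ = v₂) :
    QuotientGroup.mk' (powMonoidHom 2 : Kˣ →* Kˣ).range u₁ = QuotientGroup.mk' _ u₂ := by
  have hfixS : ∀ σ ∈ S, σ (v₁ * v₂) = v₁ * v₂ := by
    intro σ hσ
    rw [map_mul]
    by_cases hfix : σ v₁ = v₁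
    · rw [hfix, (hsign σ hσ).mp hfix]
    · rw [(AlgEquiv.apply_eq_or_eq_neg_of_mul_self hv₁ σ).resolve_left hfix,
        (AlgEquiv.apply_eq_or_eq_neg_of_mul_self hv₂ σ).resolve_left
          (mt (hsign σ hσ).mpr hfix), neg_mul_neg]
  obtain ⟨k, hk⟩ := mem_range_of_mul_self_of_forall_apply_eq h2 (c := u₁ * u₂)
    (by rw [mul_mul_mul_comm, hv₁, hv₂, map_mul])
    (AlgEquiv.apply_eq_self_of_topologicalClosure_eq_top hS hfixS)
  refine QuotientGroup.mk'_eq_mk'_of_mul_self_eq (k := k) ((algebraMap K L).injective ?_)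
  rw [map_mul, hk, map_mul, mul_mul_mul_comm, hv₁, hv₂]

theorem finite_squareClassKernel [Normal K L] (h2 : (2 : K) ≠ 0) {S : Set Gal(L/K)}
    (hSfin : S.Finite) (hS : (Subgroup.closure S).topologicalClosure = ⊤) :
    (squareClassKernel K L : Set (Kˣ ⧸ (powMonoidHom 2 : Kˣ →* Kˣ).range)).Finite := by
  choose u hu v hv using fun q : squareClassKernel K L =>
    exists_mul_self_of_mem_squareClassKernel q.2
  have := hSfin.to_subtype
  refine Set.finite_coe_iff.mp (Finite.of_injective (fun q (σ : S) => σ.1 (v q) = v q)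
    fun q₁ q₂ he => Subtype.ext ?_)
  rw [← hu q₁, ← hu q₂]
  exact mk'_eq_mk'_of_forall_apply_eq_iff h2 hS (hv q₁) (hv q₂)
    fun σ hσ => iff_of_eq (congrFun he ⟨σ, hσ⟩)

end SquareClasses

theorem stmt_2_general (K : Type*) [Field K] (hchar : (2 : K) ≠ 0) (a b α : K)
    (f : K[X]) (hf : f = (X - C a) ^ 2 - C b)
    (hfg : ∃ S : Set ((IntermediateField.adjoin K
        {x : AlgebraicClosure K | ∃ n : ℕ, 1 ≤ n ∧
          Polynomial.aeval x ((fun p => p.comp f)^[n] X) = algebraMap K (AlgebraicClosure K) α})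
        ≃ₐ[K] (IntermediateField.adjoin K
        {x : AlgebraicClosure K | ∃ n : ℕ, 1 ≤ n ∧
          Polynomial.aeval x ((fun p => p.comp f)^[n] X) = algebraMap K (AlgebraicClosure K) α})),
      S.Finite ∧ (Subgroup.closure S).topologicalClosure = ⊤) :
    Set.Finite
      (↑(Subgroup.closure
          ((QuotientGroup.mk' (powMonoidHom 2 : Kˣ →* Kˣ).range) ''
            {u : Kˣ | ∃ n : ℕ, 1 ≤ n ∧
              (u : K) = if n = 1 then -((fun x => f.eval x)^[1] a) + α
                else (fun x => f.eval x)^[n] a - α}))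
        : Set (Kˣ ⧸ (powMonoidHom 2 : Kˣ →* Kˣ).range)) := by
  obtain ⟨S, hSfin, hS⟩ := hfg
  have := normal_iteratedPreimageField (hf ▸ monic_X_sub_C_sq_sub_C a b)
    (by rw [hf, natDegree_X_sub_C_sq_sub_C]; omega) α
  refine (finite_squareClassKernel hchar hSfin hS).subset ((Subgroup.closure_le _).mpr ?_)
  rintro _ ⟨u, ⟨n, hn, hu⟩, rfl⟩
  exact mk'_mem_squareClassKernel (hu ▸ isSquare_algebraMap_adjustedOrbit hf α hn)

/-- Over any field `K` of characteristic `≠ 2`, if the Galois group of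
`K_∞(f,α)/K` is topologically finitely generated, then the subgroup of `Kˣ/(Kˣ)²`
generated by the classes of the `c_{n,α}` is finite. -/
theorem stmt_2 (K : Type*) [Field K] (hchar : (2 : K) ≠ 0) (a b α : K)
    (f : K[X]) (hf : f = (X - C a) ^ 2 - C b)
    (hα : ∀ n : ℕ, 1 ≤ n → (fun x => f.eval x)^[n] a ≠ α)
    (hfg : ∃ S : Set ((IntermediateField.adjoin K
        {x : AlgebraicClosure K | ∃ n : ℕ, 1 ≤ n ∧
          Polynomial.aeval x ((fun p => p.comp f)^[n] X) = algebraMap K (AlgebraicClosure K) α})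
        ≃ₐ[K] (IntermediateField.adjoin K
        {x : AlgebraicClosure K | ∃ n : ℕ, 1 ≤ n ∧
          Polynomial.aeval x ((fun p => p.comp f)^[n] X) = algebraMap K (AlgebraicClosure K) α})),
      S.Finite ∧ (Subgroup.closure S).topologicalClosure = ⊤) :
    Set.Finite
      (↑(Subgroup.closure
          ((QuotientGroup.mk' (powMonoidHom 2 : Kˣ →* Kˣ).range) ''
            {u : Kˣ | ∃ n : ℕ, 1 ≤ n ∧
              (u : K) = if n = 1 then -((fun x => f.eval x)^[1] a) + α
                else (fun x => f.eval x)^[n] a - α}))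
        : Set (Kˣ ⧸ (powMonoidHom 2 : Kˣ →* Kˣ).range)) :=
  stmt_2_general K hchar a b α f hf hfg
end

section
/- Let K be a number field, let f = (X − a)² − b ∈ K[X] be a monic quadratic polynomial, and let α be an element of a fixed algebraic closure K̄ of K. If the compositum K_∞(f,α) of the splitting fields over K(α) of all the polynomials f^n(X) − α, n ≥ 1, is a finite extension of K(α), then α belongs to the post-critical orbit of f, i.e., α = f^n(a) for some n ≥ 1. -/
/-!
All preimages of `α` under the iterates of `f` lie in the number field `K_∞(f,α)`. There the
height satisfies `H(z)² ≤ C · H(f z)`, so along a backward orbit heights never exceed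
`max C (H α)`, and by Northcott the backward orbit `O` of `α` is finite. Since `f⁻¹(O) ⊆ O` and
`f` is onto `K̄`, counting shows that `f` is injective on `f⁻¹(O)`; but every value other than
the critical value `f a = -b` has two distinct square-root preimages. Hence `α = f a`.
-/

open Polynomial Function

def quadMap {R : Type*} [CommRing R] (a b z : R) : R := (z - a) ^ 2 - b

def Function.backwardOrbit {α : Type*} (g : α → α) (x : α) : Set α := {z | ∃ n, g^[n] z = x}

namespace Function

variable {α β : Type*}

theorem mem_backwardOrbit_self (g : α → α) (x : α) : x ∈ backwardOrbit g x := ⟨0, rfl⟩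

theorem preimage_backwardOrbit_subset (g : α → α) (x : α) :
    g ⁻¹' backwardOrbit g x ⊆ backwardOrbit g x :=
  fun _ ⟨n, hn⟩ ↦ ⟨n + 1, hn⟩

theorem Semiconj.finite_backwardOrbit {φ : α → β} {ga : α → α} {gb : β → β}
    (h : Semiconj φ ga gb) (hφ : Injective φ) {x : α} (hx : (backwardOrbit ga x).Finite)
    (hrange : backwardOrbit gb (φ x) ⊆ Set.range φ) : (backwardOrbit gb (φ x)).Finite := by
  have hpre : φ ⁻¹' backwardOrbit gb (φ x) ⊆ backwardOrbit ga x :=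
    fun y ⟨n, hn⟩ ↦ ⟨n, hφ (by rwa [(h.iterate_right n).eq])⟩
  rw [← Set.image_preimage_eq_of_subset hrange]
  exact (hx.subset hpre).image φ

end Function

theorem Set.Finite.injOn_preimage {α : Type*} {g : α → α} {s : Set α} (hg : Surjective g)
    (hs : s.Finite) (hsub : g ⁻¹' s ⊆ s) : Set.InjOn g (g ⁻¹' s) := by
  refine Set.injOn_of_ncard_image_eq (le_antisymm (Set.ncard_image_le (hs.subset hsub)) ?_)
    (hs.subset hsub)
  rw [Set.image_preimage_eq s hg]
  exact Set.ncard_le_ncard hsub hs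

theorem Polynomial.aeval_iterate_comp_X {R A : Type*} [CommSemiring R] [CommSemiring A]
    [Algebra R A] (f : R[X]) (x : A) (n : ℕ) :
    aeval x ((fun p ↦ p.comp f)^[n] X) = (fun y ↦ aeval y f)^[n] x := by
  induction n generalizing x with
  | zero => simp
  | succ n ih => rw [iterate_succ_apply, iterate_succ_apply, ← ih, ← aeval_comp,
      ← iterate_succ_apply, iterate_succ_apply']

theorem semiconj_quadMap {R S : Type*} [CommRing R] [CommRing S] (φ : R →+* S) (a b : R) :
    Semiconj φ (quadMap a b) (quadMap (φ a) (φ b)) :=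
  fun z ↦ by simp [quadMap]

section IsAlgClosed

variable {K : Type*} [Field K] [IsAlgClosed K]

theorem quadMap_surjective (a b : K) : Surjective (quadMap a b) := fun t ↦ by
  obtain ⟨w, hw⟩ := IsAlgClosed.exists_pow_nat_eq (b + t) two_pos
  exact ⟨a + w, by simp only [quadMap]; linear_combination hw⟩

theorem exists_ne_quadMap_eq [NeZero (2 : K)] {a b t : K} (ht : t ≠ -b) :
    ∃ u v, u ≠ v ∧ quadMap a b u = t ∧ quadMap a b v = t := by
  obtain ⟨w, hw⟩ := IsAlgClosed.exists_pow_nat_eq (b + t) two_pos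
  have hw0 : w ≠ 0 := by rintro rfl; apply ht; linear_combination -hw
  refine ⟨a + w, a - w, fun h ↦ hw0 ?_, ?_, ?_⟩
  · have : (2 : K) * w = 0 := by linear_combination h
    exact (mul_eq_zero.mp this).resolve_left two_ne_zero
  all_goals simp only [quadMap]; linear_combination hw

theorem eq_neg_of_finite_backwardOrbit_quadMap [NeZero (2 : K)] {a b x : K}
    (h : (backwardOrbit (quadMap a b) x).Finite) : x = -b := by
  by_contra hx
  obtain ⟨u, v, huv, hu, hv⟩ := exists_ne_quadMap_eq (a := a) hx
  have hx' : x ∈ backwardOrbit (quadMap a b) x := mem_backwardOrbit_self _ _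
  exact huv <| h.injOn_preimage (quadMap_surjective a b) (preimage_backwardOrbit_subset _ _)
    (by rwa [Set.mem_preimage, hu]) (by rwa [Set.mem_preimage, hv]) (hu.trans hv.symm)

end IsAlgClosed

theorem le_max_of_iterate_eq_of_sq_le_mul {α : Type*} {h : α → ℝ} {g : α → α} {C : ℝ}
    (h_nonneg : ∀ x, 0 ≤ h x) (hg : ∀ x, h x ^ 2 ≤ C * h (g x)) {n : ℕ} {x y : α}
    (hxy : g^[n] x = y) : h x ≤ max C (h y) := by
  by_contra! hlt
  rw [max_lt_iff] at hlt
  have hmono : ∀ k, h x ≤ h (g^[k] x) := by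
    intro k
    induction k with
    | zero => rfl
    | succ k ih =>
      rw [iterate_succ_apply']
      have hpos : 0 < h (g^[k] x) := (h_nonneg y).trans_lt (hlt.2.trans_le ih)
      refine ih.trans (le_of_mul_le_mul_left ?_ hpos)
      calc h (g^[k] x) * h (g^[k] x) = h (g^[k] x) ^ 2 := (sq _).symm
        _ ≤ C * h (g (g^[k] x)) := hg _
        _ ≤ h (g^[k] x) * h (g (g^[k] x)) := by
          gcongr
          · exact h_nonneg _
          · exact (hlt.1.trans_le ih).le
  exact (hlt.2.trans_le (hxy ▸ hmono n)).false

namespace Height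

variable {K : Type*} [Field K] [AdmissibleAbsValues K]

theorem mulHeight₁_sq_le_mul_mulHeight₁_quadMap (a b z : K) :
    mulHeight₁ z ^ 2 ≤
      8 ^ totalWeight K * mulHeight₁ a ^ 2 * mulHeight₁ b * mulHeight₁ (quadMap a b z) := by
  have h₁ : mulHeight₁ z ≤ 2 ^ totalWeight K * mulHeight₁ (z - a) * mulHeight₁ a := by
    simpa using mulHeight₁_add_le (z - a) a
  have h₂ : mulHeight₁ (z - a) ^ 2 ≤
      2 ^ totalWeight K * mulHeight₁ (quadMap a b z) * mulHeight₁ b := by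
    rw [← mulHeight₁_pow]
    simpa [quadMap] using mulHeight₁_add_le (quadMap a b z) b
  calc mulHeight₁ z ^ 2 ≤ (2 ^ totalWeight K * mulHeight₁ (z - a) * mulHeight₁ a) ^ 2 := by
        gcongr
    _ = (2 ^ totalWeight K) ^ 2 * mulHeight₁ a ^ 2 * mulHeight₁ (z - a) ^ 2 := by ring
    _ ≤ (2 ^ totalWeight K) ^ 2 * mulHeight₁ a ^ 2 *
          (2 ^ totalWeight K * mulHeight₁ (quadMap a b z) * mulHeight₁ b) := by gcongr
    _ = _ := by
      rw [show (8 : ℝ) ^ totalWeight K = (2 ^ totalWeight K) ^ 3 by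
        rw [← pow_mul, mul_comm, pow_mul]; norm_num]
      ring

theorem finite_backwardOrbit_quadMap [Northcott (mulHeight₁ (K := K))] (a b x : K) :
    (backwardOrbit (quadMap a b) x).Finite :=
  (Northcott.finite_le (h := mulHeight₁) _).subset fun _ ⟨_, hz⟩ ↦
    le_max_of_iterate_eq_of_sq_le_mul mulHeight₁_nonneg
      (mulHeight₁_sq_le_mul_mulHeight₁_quadMap a b) hz

end Height

/-- Over a number field `K`, for `f = (X-a)^2 - b` and `α` in a fixed algebraic
closure, if the compositum over `K(α)` of the splitting fields of the `f^n(X) - α` is a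
finite extension of `K(α)`, then `α` is in the post-critical orbit of `f`. -/
theorem stmt_6 (K : Type*) [Field K] [NumberField K] (a b : K)
    (f : K[X]) (hf : f = (X - C a) ^ 2 - C b) (α : AlgebraicClosure K)
    (hfin : FiniteDimensional
      (IntermediateField.adjoin K ({α} : Set (AlgebraicClosure K)))
      (IntermediateField.adjoin
        (↥(IntermediateField.adjoin K ({α} : Set (AlgebraicClosure K))))
        {x : AlgebraicClosure K | ∃ n : ℕ, 1 ≤ n ∧
          Polynomial.aeval x ((fun p => p.comp f)^[n] X) = α})) :
    ∃ n : ℕ, 1 ≤ n ∧ algebraMap K (AlgebraicClosure K) ((fun x => f.eval x)^[n] a) = α := by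
  set g := quadMap (algebraMap K (AlgebraicClosure K) a) (algebraMap K _ b)
  have haeval (n : ℕ) (x : AlgebraicClosure K) :
      aeval x ((fun p ↦ p.comp f)^[n] X) = g^[n] x := by
    rw [aeval_iterate_comp_X]
    congr 1
    ext y
    simp [g, hf, quadMap]
  set Kα := IntermediateField.adjoin K {α}
  set L := IntermediateField.adjoin Kα
    {x | ∃ n : ℕ, 1 ≤ n ∧ aeval x ((fun p ↦ p.comp f)^[n] X) = α}
  have : FiniteDimensional K Kα :=
    IntermediateField.adjoin.finiteDimensional (Algebra.IsIntegral.isIntegral α)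
  have : NumberField Kα := .of_module_finite K Kα
  have : NumberField L := .of_module_finite Kα L
  have hαL : α ∈ L := L.algebraMap_mem ⟨α, IntermediateField.mem_adjoin_simple_self K α⟩
  have haL : algebraMap K _ a ∈ L := L.algebraMap_mem (algebraMap K Kα a)
  have hbL : algebraMap K _ b ∈ L := L.algebraMap_mem (algebraMap K Kα b)
  have hrange : backwardOrbit g α ⊆ Set.range (algebraMap L _) := by
    rintro z ⟨_ | n, hz⟩
    · exact ⟨⟨α, hαL⟩, hz.symm⟩
    · exact ⟨⟨z, IntermediateField.subset_adjoin _ _ ⟨n + 1, by omega, by rw [haeval, hz]⟩⟩, rfl⟩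
  have hfinite : (backwardOrbit g α).Finite :=
    (semiconj_quadMap (algebraMap L _) ⟨_, haL⟩ ⟨_, hbL⟩).finite_backwardOrbit
      (algebraMap L _).injective (Height.finite_backwardOrbit_quadMap _ _ ⟨α, hαL⟩) hrange
  refine ⟨1, le_rfl, ?_⟩
  simp [hf, eq_neg_of_finite_backwardOrbit_quadMap hfinite]
end

section
/- Let G be a profinite group (a compact, Hausdorff, totally disconnected topological group) which is topologically finitely generated, and let H be an open subgroup of G. Then H is topologically finitely generated. -/
/-!
A dense subgroup `Γ = ⟨S⟩` with `S` finite meets the open subgroup `H` in a dense subgroup of `H`.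
Compactness makes `H` of finite index, so `Γ ⊓ H` has finite index in `Γ` and is finitely
generated by Schreier's lemma; its finitely many generators topologically generate `H`.
-/

namespace Subgroup

variable {G : Type*} [Group G]

def subgroupOfCommEquiv (H K : Subgroup G) : H.subgroupOf K ≃* K.subgroupOf H where
  toFun x := ⟨⟨x.1.1, x.2⟩, x.1.2⟩
  invFun x := ⟨⟨x.1.1, x.2⟩, x.1.2⟩
  map_mul' _ _ := rfl

instance fg_subgroupOf_of_finiteIndex (Γ H : Subgroup G) [Group.FG Γ] [H.FiniteIndex] :
    Group.FG (Γ.subgroupOf H) :=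
  Group.fg_of_surjective (f := (subgroupOfCommEquiv H Γ).toMonoidHom)
    (subgroupOfCommEquiv H Γ).surjective

theorem dense_subgroupOf_of_isOpen [TopologicalSpace G] {Γ H : Subgroup G}
    (hΓ : Dense (Γ : Set G)) (hH : IsOpen (H : Set G)) : Dense (Γ.subgroupOf H : Set H) := by
  rw [coe_subgroupOf]
  exact hΓ.preimage hH.isOpenMap_subtype_val

theorem topologicalClosure_eq_top_iff_dense [TopologicalSpace G] [IsTopologicalGroup G]
    {Γ : Subgroup G} : Γ.topologicalClosure = ⊤ ↔ Dense (Γ : Set G) := by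
  rw [SetLike.ext'_iff, topologicalClosure_coe, coe_top, dense_iff_closure_eq]

end Subgroup

theorem stmt_10_general (G : Type*) [Group G] [TopologicalSpace G] [IsTopologicalGroup G]
    [CompactSpace G]
    (hG : ∃ S : Set G, S.Finite ∧ (Subgroup.closure S).topologicalClosure = ⊤)
    (H : Subgroup G) (hH : IsOpen (H : Set G)) :
    ∃ T : Set H, T.Finite ∧ (Subgroup.closure T).topologicalClosure = ⊤ := by
  obtain ⟨S, hSfin, hSdense⟩ := hG
  have : Finite S := hSfin
  have : Finite (G ⧸ H) := H.quotient_finite_of_isOpen hH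
  have : H.FiniteIndex := Subgroup.finiteIndex_of_finite_quotient
  obtain ⟨T, hT, hTfin⟩ := ((Subgroup.closure S).subgroupOf H).fg_iff.mp <|
    (Group.fg_iff_subgroup_fg _).mp (Subgroup.fg_subgroupOf_of_finiteIndex (Subgroup.closure S) H)
  refine ⟨T, hTfin, ?_⟩
  rw [hT, Subgroup.topologicalClosure_eq_top_iff_dense]
  exact Subgroup.dense_subgroupOf_of_isOpen
    (Subgroup.topologicalClosure_eq_top_iff_dense.mp hSdense) hH

/-- An open subgroup of a topologically finitely generated profinite group is
topologically finitely generated. -/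
theorem stmt_10 (G : Type*) [Group G] [TopologicalSpace G] [IsTopologicalGroup G]
    [CompactSpace G] [T2Space G] [TotallyDisconnectedSpace G]
    (hG : ∃ S : Set G, S.Finite ∧ (Subgroup.closure S).topologicalClosure = ⊤)
    (H : Subgroup G) (hH : IsOpen (H : Set G)) :
    ∃ T : Set H, T.Finite ∧ (Subgroup.closure T).topologicalClosure = ⊤ :=
  stmt_10_general G hG H hH
end

section
/- Let K be a number field, a ∈ K, and f = X² + a ∈ K[X], and let {c_n} be the adjusted post-critical orbit of f (c_1 = −a and c_n = f^n(0) for n ≥ 2); assume c_n ≠ 0 for every n ≥ 1 (equivalently, 0 is not periodic for f). Fix a finite place v of K with additive valuation v, suppose v(c_1) ≥ 0, and suppose there exists an index i with v(c_i) > 0; let n be the minimal such index. Then for every m ≥ 1: if n divides m then v(c_m) = v(c_n), and otherwise v(c_m) = 0. -/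
/-!
Pass to the multiplicative valuation `w` and the orbit `bₖ = fᵏ(0)`, for which `w(bₖ) = w(cₖ)`.
Since `w(a) ≤ 1` the whole orbit is `w`-integral, and on integral elements `f` does not increase
`w`-distances because `f(x) - f(y) = (x - y)(x + y)`. As `f(bₙ) - f(0) = bₙ²`, this gives
`w(b_{j+n} - b_j) ≤ w(bₙ)²` for `j ≥ 1`, hence `w(b_{j+qn} - b_j) ≤ w(bₙ)² < w(bₙ) < 1`.
The ultrametric inequality then transports `w(bₙ)` to every `b_{qn}`, and the value
`w(b_r) = 1` (`0 < r < n`, by minimality of `n`) to every `b_{qn+r}`.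
-/

open Polynomial IsDedekindDomain

/-- The normalized additive valuation associated to a finite place `v` of a number field `K`,
extended by `0` at `0`.  (So `addVal K v π = 1` for a uniformizer `π` of `v`.) -/
noncomputable def addVal (K : Type*) [Field K] [NumberField K]
    (v : HeightOneSpectrum (NumberField.RingOfIntegers K)) (x : K) : ℤ :=
  if h : v.valuation K x = 0 then 0 else -Multiplicative.toAdd (WithZero.unzero h)

namespace Valuation

variable {R Γ₀ : Type*} [CommRing R] [LinearOrderedCommGroupWithZero Γ₀] (w : Valuation R Γ₀)
  {a : R}

theorem iterate_sq_add_le_one (ha : w a ≤ 1) {x : R} (hx : w x ≤ 1) (m : ℕ) :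
    w ((· ^ 2 + a)^[m] x) ≤ 1 := by
  induction m with
  | zero => exact hx
  | succ m ih =>
    rw [Function.iterate_succ_apply']
    exact w.map_add_le (by rw [map_pow]; exact pow_le_one' ih 2) ha

theorem map_sub_sq_add_le {x y : R} (hx : w x ≤ 1) (hy : w y ≤ 1) :
    w ((x ^ 2 + a) - (y ^ 2 + a)) ≤ w (x - y) :=
  calc w ((x ^ 2 + a) - (y ^ 2 + a)) = w (x - y) * w (x + y) := by
        rw [← map_mul]; ring_nf
    _ ≤ w (x - y) * 1 := mul_le_mul_right (w.map_add_le hx hy) _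
    _ = w (x - y) := mul_one _

theorem map_sub_iterate_sq_add_le (ha : w a ≤ 1) {x y : R} (hx : w x ≤ 1) (hy : w y ≤ 1)
    (m : ℕ) : w ((· ^ 2 + a)^[m] x - (· ^ 2 + a)^[m] y) ≤ w (x - y) := by
  induction m with
  | zero => exact le_rfl
  | succ m ih =>
    simp only [Function.iterate_succ_apply']
    exact (w.map_sub_sq_add_le (w.iterate_sq_add_le_one ha hx m)
      (w.iterate_sq_add_le_one ha hy m)).trans ih

theorem map_sub_iterate_sq_add_zero_add_le (ha : w a ≤ 1) (n : ℕ) {j : ℕ} (hj : 0 < j) :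
    w ((· ^ 2 + a)^[j + n] 0 - (· ^ 2 + a)^[j] 0) ≤ w ((· ^ 2 + a)^[n] 0) ^ 2 := by
  obtain ⟨k, rfl⟩ := Nat.exists_eq_add_one_of_ne_zero hj.ne'
  have h0 : w (0 : R) ≤ 1 := by simp
  have hb := w.iterate_sq_add_le_one ha h0 n
  rw [Function.iterate_add_apply, Function.iterate_succ_apply, Function.iterate_succ_apply]
  calc _ ≤ w ((((· ^ 2 + a)^[n] 0) ^ 2 + a) - ((0 : R) ^ 2 + a)) :=
        w.map_sub_iterate_sq_add_le ha (w.map_add_le (by simpa using pow_le_one' hb 2) ha)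
          (w.map_add_le (by simp) ha) k
    _ = _ := by simp

theorem map_sub_iterate_sq_add_zero_add_mul_le (ha : w a ≤ 1) (n q : ℕ) {j : ℕ} (hj : 0 < j) :
    w ((· ^ 2 + a)^[j + q * n] 0 - (· ^ 2 + a)^[j] 0) ≤ w ((· ^ 2 + a)^[n] 0) ^ 2 := by
  induction q with
  | zero => simp
  | succ q ih =>
    rw [← sub_add_sub_cancel _ ((· ^ 2 + a)^[j + q * n] 0), add_one_mul, ← add_assoc]
    exact w.map_add_le (w.map_sub_iterate_sq_add_zero_add_le ha n (by omega)) ih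

variable {n : ℕ}

theorem map_iterate_sq_add_zero_mul (ha : w a ≤ 1) (hn : 0 < n)
    (he₀ : 0 < w ((· ^ 2 + a)^[n] 0)) (he₁ : w ((· ^ 2 + a)^[n] 0) < 1) {q : ℕ} (hq : 0 < q) :
    w ((· ^ 2 + a)^[n * q] 0) = w ((· ^ 2 + a)^[n] 0) := by
  obtain ⟨k, rfl⟩ := Nat.exists_eq_add_one_of_ne_zero hq.ne'
  rw [mul_add_one, add_comm, mul_comm]
  exact w.map_eq_of_sub_lt ((w.map_sub_iterate_sq_add_zero_add_mul_le ha n k hn).trans_lt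
    (pow_lt_self_of_lt_one₀ he₀ he₁ one_lt_two))

theorem map_iterate_sq_add_zero_of_not_dvd (ha : w a ≤ 1) (hn : 0 < n)
    (he₁ : w ((· ^ 2 + a)^[n] 0) < 1)
    (hr : ∀ r, 0 < r → r < n → w ((· ^ 2 + a)^[r] 0) = 1) {m : ℕ} (hm : ¬ n ∣ m) :
    w ((· ^ 2 + a)^[m] 0) = 1 := by
  have hr₀ : 0 < m % n := Nat.pos_of_ne_zero fun h => hm (Nat.dvd_of_mod_eq_zero h)
  have hrn := hr _ hr₀ (Nat.mod_lt m hn)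
  have hclose := w.map_sub_iterate_sq_add_zero_add_mul_le ha n (m / n) hr₀
  rw [Nat.mod_add_div'] at hclose
  rw [← hrn]
  refine w.map_eq_of_sub_lt (hclose.trans_lt ?_)
  rw [hrn]
  exact pow_lt_one₀ zero_le he₁ two_ne_zero

end Valuation

section addVal

variable {K : Type*} [Field K] [NumberField K]
  (v : HeightOneSpectrum (NumberField.RingOfIntegers K)) {x y : K}

theorem addVal_congr (h : v.valuation K x = v.valuation K y) : addVal K v x = addVal K v y := by
  simp only [addVal, h]

theorem valuation_eq_ofAdd_neg_addVal (hx : x ≠ 0) :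
    v.valuation K x = ↑(Multiplicative.ofAdd (-addVal K v x)) := by
  have h : v.valuation K x ≠ 0 := by simpa using hx
  rw [addVal, dif_neg h, neg_neg, ofAdd_toAdd, WithZero.coe_unzero]

theorem addVal_eq_zero_of_valuation_eq_one (h : v.valuation K x = 1) : addVal K v x = 0 := by
  have hx : x ≠ 0 := by
    rintro rfl
    simp at h
  rw [valuation_eq_ofAdd_neg_addVal v hx, ← WithZero.coe_one, WithZero.coe_inj] at h
  simpa using h

theorem addVal_nonneg_iff : 0 ≤ addVal K v x ↔ v.valuation K x ≤ 1 := by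
  rcases eq_or_ne x 0 with rfl | hx
  · simp [addVal]
  rw [valuation_eq_ofAdd_neg_addVal v hx, ← WithZero.coe_one, WithZero.coe_le_coe,
    ← ofAdd_zero, Multiplicative.ofAdd_le]
  omega

theorem addVal_pos_iff (hx : x ≠ 0) : 0 < addVal K v x ↔ v.valuation K x < 1 := by
  rw [valuation_eq_ofAdd_neg_addVal v hx, ← WithZero.coe_one, WithZero.coe_lt_coe,
    ← ofAdd_zero, Multiplicative.ofAdd_lt]
  omega

end addVal

/-- Let `f = X² + a` over a number field `K`, with adjusted post-critical
orbit `c₁ = -a`, `cₙ = fⁿ(0)` (`n ≥ 2`), all nonzero; let `v` be a finite place of `K` with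
`v(c₁) ≥ 0`, and let `n` be the minimal index with `v(cₙ) > 0`.  Then for every `m ≥ 1`,
`v(c_m) = v(cₙ)` if `n ∣ m`, and `v(c_m) = 0` otherwise. -/
theorem stmt_13 (K : Type*) [Field K] [NumberField K] (a : K)
    (f : K[X]) (hf : f = X ^ 2 + C a)
    (c : ℕ → K) (hc : ∀ n : ℕ, c n = if n = 1 then -a else (fun x => f.eval x)^[n] 0)
    (hne : ∀ n : ℕ, 1 ≤ n → c n ≠ 0)
    (v : HeightOneSpectrum (NumberField.RingOfIntegers K))
    (hv1 : 0 ≤ addVal K v (c 1))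
    (n : ℕ) (hn1 : 1 ≤ n) (hn : 0 < addVal K v (c n))
    (hmin : ∀ i : ℕ, 1 ≤ i → 0 < addVal K v (c i) → n ≤ i) :
    ∀ m : ℕ, 1 ≤ m →
      (n ∣ m → addVal K v (c m) = addVal K v (c n)) ∧
      (¬ n ∣ m → addVal K v (c m) = 0) := by
  set w := v.valuation K
  have hfX : (fun x => f.eval x) = (· ^ 2 + a) := by
    funext x
    simp [hf]
  have hwc : ∀ k, w (c k) = w ((· ^ 2 + a)^[k] 0) := by
    intro k
    rw [hc, hfX]
    split_ifs with hk
    · simp [hk]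
    · rfl
  have ha : w a ≤ 1 := by
    have hc₁ : w (c 1) ≤ 1 := (addVal_nonneg_iff v).1 hv1
    simpa [hwc] using hc₁
  have he₀ : 0 < w ((· ^ 2 + a)^[n] 0) := hwc n ▸ (Valuation.pos_iff w).2 (hne n hn1)
  have he₁ : w ((· ^ 2 + a)^[n] 0) < 1 := hwc n ▸ (addVal_pos_iff v (hne n hn1)).1 hn
  have hr : ∀ r, 0 < r → r < n → w ((· ^ 2 + a)^[r] 0) = 1 := by
    intro r hr₀ hrn
    refine le_antisymm (w.iterate_sq_add_le_one ha (by simp) r) (not_lt.1 fun hlt => ?_)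
    exact hrn.not_ge (hmin r hr₀ ((addVal_pos_iff v (hne r hr₀)).2 (hwc r ▸ hlt)))
  intro m hm
  constructor
  · rintro ⟨q, rfl⟩
    refine addVal_congr v ?_
    rw [hwc, hwc, w.map_iterate_sq_add_zero_mul ha hn1 he₀ he₁ (Nat.pos_of_mul_pos_left hm)]
  · intro hndvd
    refine addVal_eq_zero_of_valuation_eq_one v ?_
    rw [hwc]
    exact w.map_iterate_sq_add_zero_of_not_dvd ha hn1 he₁ hr hndvd
end

section
/- Every commutative subgroup of Ω_∞, the automorphism group of the infinite rooted regular binary tree, has infinite index in Ω_∞. -/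
/-- The automorphism group `Ω_∞` of the infinite rooted regular binary tree: vertices are
finite binary strings (lists of booleans), and automorphisms are the permutations of the
vertex set preserving lengths and the prefix relation. -/
def OmegaInf : Subgroup (Equiv.Perm (List Bool)) where
  carrier := {σ | (∀ l : List Bool, (σ l).length = l.length) ∧
    ∀ l m : List Bool, l <+: m ↔ σ l <+: σ m}
  one_mem' := ⟨fun _ => rfl, fun _ _ => Iff.rfl⟩
  mul_mem' := by
    rintro σ τ ⟨hσ1, hσ2⟩ ⟨hτ1, hτ2⟩
    refine ⟨fun l => ?_, fun l m => ?_⟩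
    · simp only [Equiv.Perm.mul_apply, hσ1, hτ1]
    · simp only [Equiv.Perm.mul_apply]
      exact (hτ2 l m).trans (hσ2 _ _)
  inv_mem' := by
    rintro σ ⟨h1, h2⟩
    refine ⟨fun l => ?_, fun l m => ?_⟩
    · conv_rhs => rw [← (show σ (σ⁻¹ l) = l from σ.apply_symm_apply l)]
      rw [h1]
    · have h := h2 (σ⁻¹ l) (σ⁻¹ m)
      rw [(show ∀ x, σ (σ⁻¹ x) = x from σ.apply_symm_apply), (show ∀ x, σ (σ⁻¹ x) = x from σ.apply_symm_apply)] at h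
      exact h.symm

/-!
Let `x n ∈ Ω_∞` flip bit `n` of every string whose bit `n - 1` is `true` (`x 0` flips bit `0`),
and let `g n = x 0 * ⋯ * x (n - 1)`. If `H` had finite index, three of the `g n`, say
`i < j < k`, would lie in one coset, so `x i * ⋯ * x (j - 1)` and `x j * ⋯ * x (k - 1)` would
both lie in `H`. They do not commute: on the all-`true` string of length `k` the first clears
bits `i, …, j - 1` and the second bits `j, …, k - 1`, so applying the second one first clears
bit `j`, while applying it after the first one leaves bit `j` alone because bit `j - 1` is then
already cleared.
-/

lemma Subgroup.infinite_quotient_of_not_commute {G : Type*} [Group G] (H : Subgroup G)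
    (hH : ∀ x ∈ H, ∀ y ∈ H, x * y = y * x) (g : ℕ → G)
    (hg : ∀ i j k, i < j → j < k → ¬ Commute ((g i)⁻¹ * g j) ((g j)⁻¹ * g k)) :
    Infinite (G ⧸ H) := by
  by_contra hfin
  rw [not_infinite_iff_finite] at hfin
  set coset : ℕ → G ⧸ H := fun n => g n
  obtain ⟨y, hy⟩ := Finite.exists_infinite_fiber coset
  rw [Set.infinite_coe_iff] at hy
  have hmem {m n : ℕ} (hm : m ∈ coset ⁻¹' {y}) (hn : n ∈ coset ⁻¹' {y}) :
      (g m)⁻¹ * g n ∈ H :=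
    QuotientGroup.eq.mp (hm.trans hn.symm)
  obtain ⟨i, hi⟩ := hy.nonempty
  obtain ⟨j, hj, hij⟩ := hy.exists_gt i
  obtain ⟨k, hk, hjk⟩ := hy.exists_gt j
  exact hg i j k hij hjk (hH _ (hmem hi hj) _ (hmem hj hk))

namespace OmegaInf

def flipAt (c : List Bool → Bool) (n : ℕ) (l : List Bool) : List Bool :=
  if c (l.take n) then l.modify n not else l

section Flip

variable (c : List Bool → Bool) (n : ℕ)

lemma flipAt_of_length_le {l : List Bool} (h : l.length ≤ n) : flipAt c n l = l := by
  unfold flipAt; split <;> simp [List.modify_eq_self h]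

@[simp]
lemma length_flipAt (l : List Bool) : (flipAt c n l).length = l.length := by
  unfold flipAt; split <;> simp

lemma take_flipAt (l : List Bool) (k : ℕ) : (flipAt c n l).take k = flipAt c n (l.take k) := by
  rcases lt_or_ge n k with hnk | hkn
  · simp only [flipAt, List.take_take, min_eq_left hnk.le]
    split <;> simp [List.take_modify]
  · rw [flipAt_of_length_le c n ((List.length_take_le _ _).trans hkn)]
    unfold flipAt; split
    · rw [List.take_modify, List.modify_eq_self ((List.length_take_le _ _).trans hkn)]
    · rfl

lemma flipAt_involutive : Function.Involutive (flipAt c n) := by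
  intro l
  have hc : c ((flipAt c n l).take n) = c (l.take n) := by
    rw [take_flipAt, flipAt_of_length_le c n (List.length_take_le _ _)]
  unfold flipAt at hc ⊢
  split <;> simp_all [List.modify_modify_eq, show (not ∘ not) = id from funext Bool.not_not]

lemma flipAt_append_cons {p s : List Bool} (hp : p.length = n) (b : Bool) :
    flipAt c n (p ++ b :: s) = p ++ (if c p then !b else b) :: s := by
  subst hp
  have hmod : (p ++ b :: s).modify p.length not = p ++ (!b) :: s := by
    induction p <;> simp_all
  unfold flipAt; split <;> simp_all

lemma mem_of_involutive {f : List Bool → List Bool} (hf : Function.Involutive f)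
    (hlen : ∀ l, (f l).length = l.length) (htake : ∀ l k, (f l).take k = f (l.take k)) :
    hf.toPerm f ∈ OmegaInf := by
  have hmono : ∀ {l m}, l <+: m → f l <+: f m := fun {l m} h => by
    rw [List.prefix_iff_eq_take.mp h, ← htake]
    exact List.take_prefix _ _
  refine ⟨hlen, fun l m => ⟨hmono, fun h => ?_⟩⟩
  simpa only [Function.Involutive.coe_toPerm, hf _] using hmono h

def flip : OmegaInf :=
  ⟨(flipAt_involutive c n).toPerm, mem_of_involutive _ (length_flipAt c n) (take_flipAt c n)⟩

@[simp]
lemma flip_apply (l : List Bool) : (flip c n : Equiv.Perm (List Bool)) l = flipAt c n l := rfl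

end Flip

@[simp]
lemma coe_mul_apply (x y : OmegaInf) (l : List Bool) :
    (↑(x * y) : Equiv.Perm (List Bool)) l =
      (x : Equiv.Perm (List Bool)) ((y : Equiv.Perm (List Bool)) l) := rfl

/-- The root counts as ending in `true`, so `flip lastBit 0` swaps the two halves of the tree. -/
def lastBit (p : List Bool) : Bool := p.getLast?.getD true

def flipProd : ℕ → ℕ → OmegaInf
  | _, 0 => 1
  | i, d + 1 => flip lastBit i * flipProd (i + 1) d

lemma flipProd_add (i d e : ℕ) : flipProd i (d + e) = flipProd i d * flipProd (i + d) e := by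
  induction d generalizing i with
  | zero => simp [flipProd]
  | succ d ih =>
    rw [Nat.add_right_comm, flipProd, ih, flipProd, mul_assoc, Nat.add_right_comm, Nat.add_assoc]

lemma inv_flipProd_zero_mul_flipProd_zero {i j : ℕ} (h : i ≤ j) :
    (flipProd 0 i)⁻¹ * flipProd 0 j = flipProd i (j - i) := by
  have := flipProd_add 0 i (j - i)
  rw [zero_add, Nat.add_sub_cancel' h] at this
  rw [inv_mul_eq_iff_eq_mul, this]

lemma flipProd_apply_replicate_true {i : ℕ} {p : List Bool} (hi : p.length = i)
    (hp : lastBit p = true) (d : ℕ) (s : List Bool) :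
    (flipProd i d : Equiv.Perm (List Bool)) (p ++ (List.replicate d true ++ s)) =
      p ++ (List.replicate d false ++ s) := by
  induction d generalizing i p with
  | zero => simp [flipProd]
  | succ d ih =>
    have htail := ih (i := i + 1) (p := p ++ [true]) (by simp [hi]) (by simp [lastBit])
    simp only [List.append_assoc, List.singleton_append] at htail
    simp only [flipProd, coe_mul_apply, List.replicate_succ, List.cons_append, htail, flip_apply,
      flipAt_append_cons _ _ hi, hp]
    rfl

lemma flipProd_apply_of_lastBit_false {i : ℕ} {p : List Bool} (hi : p.length = i)
    (hp : lastBit p = false) (d : ℕ) (s : List Bool) :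
    (flipProd i (d + 1) : Equiv.Perm (List Bool)) (p ++ true :: (List.replicate d true ++ s)) =
      p ++ true :: (List.replicate d false ++ s) := by
  have htail := flipProd_apply_replicate_true (i := i + 1) (p := p ++ [true]) (by simp [hi])
    (by simp [lastBit]) d s
  simp only [List.append_assoc, List.singleton_append] at htail
  simp only [flipProd, coe_mul_apply, htail, flip_apply, flipAt_append_cons _ _ hi, hp]
  rfl

lemma lastBit_replicate_true (n : ℕ) : lastBit (List.replicate n true) = true := by
  cases n <;> simp [lastBit, List.getLast?_replicate]

open List in
lemma not_commute_flipProd {i a b : ℕ} (ha : 0 < a) (hb : 0 < b) :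
    ¬ Commute (flipProd i a) (flipProd (i + a) b) := by
  obtain ⟨a, rfl⟩ : ∃ a', a = a' + 1 := ⟨a - 1, by omega⟩
  obtain ⟨b, rfl⟩ : ∃ b', b = b' + 1 := ⟨b - 1, by omega⟩
  have hsplit (s : List Bool) :
      replicate (i + (a + 1)) true ++ s = replicate i true ++ (replicate (a + 1) true ++ s) := by
    rw [← append_assoc, replicate_append_replicate]
  have hlast : lastBit (replicate i true ++ replicate (a + 1) false) = false := by
    simp [lastBit, getLast?_replicate]
  have e1 := flipProd_apply_replicate_true length_replicate (lastBit_replicate_true (i + (a + 1)))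
    (b + 1) []
  have e2 := flipProd_apply_replicate_true length_replicate (lastBit_replicate_true i)
    (a + 1) (replicate (b + 1) false ++ [])
  have e3 := flipProd_apply_replicate_true length_replicate (lastBit_replicate_true i)
    (a + 1) (replicate (b + 1) true ++ [])
  have e4 := flipProd_apply_of_lastBit_false (i := i + (a + 1)) (by simp) hlast b []
  simp only [append_assoc] at e4
  intro h
  have := congrArg (fun x : OmegaInf => (x : Equiv.Perm (List Bool))
    (replicate (i + (a + 1)) true ++ (replicate (b + 1) true ++ []))) h
  simp only [coe_mul_apply] at this
  rw [e1, hsplit, e2, hsplit, e3] at this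
  simpa [replicate_succ] using this.trans e4

end OmegaInf

/-- Every commutative subgroup of `Ω_∞` has infinite index in `Ω_∞`. -/
theorem stmt_16 (H : Subgroup OmegaInf)
    (hH : ∀ x ∈ H, ∀ y ∈ H, x * y = y * x) :
    Infinite (OmegaInf ⧸ H) := by
  refine H.infinite_quotient_of_not_commute hH (OmegaInf.flipProd 0) fun i j k hij hjk => ?_
  rw [OmegaInf.inv_flipProd_zero_mul_flipProd_zero hij.le,
    OmegaInf.inv_flipProd_zero_mul_flipProd_zero hjk.le]
  have := OmegaInf.not_commute_flipProd (i := i) (Nat.sub_pos_of_lt hij) (Nat.sub_pos_of_lt hjk)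
  rwa [Nat.add_sub_cancel' hij.le] at this
end
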